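/- Let F, E0 be subspaces of R^N with ||P_F P_{E0}||_op <= 2.2*eps, let x0 be in E0, e in R^N, E = F^perp ∩ (F + E0), and r = P_E x0 + P_{F^perp} e. Then ||x0 - r||_2 <= 2.2*eps*||x0||_2 + ||e||_2. -/

import Mathlib

open scoped BigOperators

noncomputable def l2 {d : ℕ} (v : Fin d → ℝ) : ℝ := Real.sqrt (∑ i, (v i)^2)

noncomputable def l1 {d : ℕ} (v : Fin d → ℝ) : ℝ := ∑ i, |v i|

noncomputable def linf {d : ℕ} (v : Fin d → ℝ) : ℝ := ⨆ i, |v i|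

noncomputable def restrict {d : ℕ} (v : Fin d → ℝ) (T : Finset (Fin d)) : Fin d → ℝ :=
  fun i => if i ∈ T then v i else 0

open Classical in
noncomputable def spt {d : ℕ} (v : Fin d → ℝ) : Finset (Fin d) :=
  Finset.univ.filter (fun i => v i ≠ 0)

def RIC {N d : ℕ} (Φ : Matrix (Fin N) (Fin d) ℝ) (m : ℕ) (ε : ℝ) : Prop :=
  ∀ z : Fin d → ℝ, (spt z).card ≤ m →
    (1 - ε) * l2 z ≤ l2 (Φ.mulVec z) ∧ l2 (Φ.mulVec z) ≤ (1 + ε) * l2 z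

noncomputable def proj {N : ℕ} (L : Submodule ℝ (EuclideanSpace ℝ (Fin N))) :
    EuclideanSpace ℝ (Fin N) →L[ℝ] EuclideanSpace ℝ (Fin N) :=
  L.subtypeL.comp (Submodule.orthogonalProjection L)

noncomputable def colSpan {N d : ℕ} (Φ : Matrix (Fin N) (Fin d) ℝ) (I : Finset (Fin d)) :
    Submodule ℝ (EuclideanSpace ℝ (Fin N)) :=
  Submodule.span ℝ ((fun j => (WithLp.toLp 2 (fun i => Φ i j) : EuclideanSpace ℝ (Fin N))) '' (I : Set (Fin d)))

/-! Since `F ≤ F ⊔ E₀` and `x₀ ∈ F ⊔ E₀`, the component `P_{Fᗮ} x₀` of `x₀` already lies in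
`E = Fᗮ ⊓ (F ⊔ E₀)`, so `P_E x₀ = P_{Fᗮ} x₀` and `x₀ - r = P_F P_{E₀} x₀ - P_{Fᗮ} e`.
Below, `proj L` is used as the definitionally equal `L.starProjection`. -/

namespace Submodule

variable {𝕜 E : Type*} [RCLike 𝕜] [NormedAddCommGroup E] [InnerProductSpace 𝕜 E]

theorem starProjection_orthogonal_inf_of_le {K M : Submodule 𝕜 E} [K.HasOrthogonalProjection]
    [(Kᗮ ⊓ M).HasOrthogonalProjection] (hKM : K ≤ M) {x : E} (hx : x ∈ M) :
    (Kᗮ ⊓ M).starProjection x = Kᗮ.starProjection x := by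
  have hKx : K.starProjection x ∈ K := K.starProjection_apply_mem x
  refine eq_starProjection_of_mem_orthogonal ⟨Kᗮ.starProjection_apply_mem x, ?_⟩ ?_
  · rw [starProjection_orthogonal_val]
    exact M.sub_mem hx (hKM hKx)
  · rw [starProjection_orthogonal_val, sub_sub_cancel]
    exact orthogonal_le inf_le_left (K.le_orthogonal_orthogonal hKx)

theorem norm_starProjection_apply_le_of_mem {K L : Submodule 𝕜 E} [K.HasOrthogonalProjection]
    [L.HasOrthogonalProjection] {x : E} (hx : x ∈ L) :
    ‖K.starProjection x‖ ≤ ‖K.starProjection ∘L L.starProjection‖ * ‖x‖ := by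
  simpa [starProjection_eq_self_iff.2 hx] using
    (K.starProjection ∘L L.starProjection).le_opNorm x

end Submodule

/-- Lemma 2.3 (Approximation of the residual). -/
theorem stmt13 {N : ℕ} (F E₀ : Submodule ℝ (EuclideanSpace ℝ (Fin N))) (ε : ℝ)
    (h : ‖(proj F).comp (proj E₀)‖ ≤ 2.2 * ε)
    (x₀ : EuclideanSpace ℝ (Fin N)) (hx₀ : x₀ ∈ E₀)
    (e : EuclideanSpace ℝ (Fin N))
    (r : EuclideanSpace ℝ (Fin N)) (hr : r = proj (Fᗮ ⊓ (F ⊔ E₀)) x₀ + proj Fᗮ e) :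
    ‖x₀ - r‖ ≤ 2.2 * ε * ‖x₀‖ + ‖e‖ := by
  have hPE : proj (Fᗮ ⊓ (F ⊔ E₀)) x₀ = x₀ - F.starProjection x₀ :=
    (F.starProjection_orthogonal_inf_of_le le_sup_left (Submodule.mem_sup_right hx₀)).trans
      (F.starProjection_orthogonal_val x₀)
  calc ‖x₀ - r‖ = ‖F.starProjection x₀ - Fᗮ.starProjection e‖ := by
        rw [hr, hPE, sub_add_eq_sub_sub, sub_sub_cancel]; rfl
    _ ≤ ‖F.starProjection x₀‖ + ‖Fᗮ.starProjection e‖ := norm_sub_le _ _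
    _ ≤ 2.2 * ε * ‖x₀‖ + ‖e‖ := by
        gcongr
        · exact (F.norm_starProjection_apply_le_of_mem hx₀).trans (by gcongr; exact h)
        · exact Fᗮ.norm_starProjection_apply_le e
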